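/- The maximally mixed state ρ_m = I/n_s on an n_s-dimensional Hilbert space is the unique minimizer of ρ₂ ↦ max over density matrices ρ₁ of ‖ρ₁ − ρ₂‖²_HS, and the min-max value equals (n_s − 1)/n_s. Moreover, for any density matrix ρ₂, max over density matrices ρ₁ of ‖ρ₂ − ρ₁‖²_HS = ‖ρ₂‖²_HS + 1 − 2ζ_min(ρ₂), where ζ_min(ρ₂) is the smallest eigenvalue of ρ₂. -/

import Mathlib

open Matrix Kronecker
open scoped ComplexOrder

/-- Hilbert–Schmidt (Frobenius) norm of a complex square matrix. -/
noncomputable def hsNorm {k : Type*} [Fintype k] (M : Matrix k k ℂ) : ℝ :=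
  Real.sqrt (Matrix.trace (Mᴴ * M)).re

/-- The positive-semidefinite square root, as defined in the older Mathlib (since removed). -/
noncomputable def Matrix.PosSemidef.sqrt {n 𝕜 : Type*} [Fintype n] [DecidableEq n] [RCLike 𝕜]
    {A : Matrix n n 𝕜} (hA : A.PosSemidef) : Matrix n n 𝕜 :=
  (hA.1.eigenvectorUnitary : Matrix n n 𝕜) *
    diagonal (fun i => ((Real.sqrt (hA.1.eigenvalues i) : ℝ) : 𝕜)) *
    (star hA.1.eigenvectorUnitary : Matrix n n 𝕜)

/-- Trace norm: trace of the positive-semidefinite square root of `Mᴴ * M`. -/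
noncomputable def traceNorm {k : Type*} [Fintype k] [DecidableEq k] (M : Matrix k k ℂ) : ℝ :=
  (Matrix.trace (Matrix.posSemidef_conjTranspose_mul_self M).sqrt).re

/-- Induced two-norm: the largest singular value of `M`. -/
noncomputable def twoNorm {k : Type*} [Fintype k] [DecidableEq k] (M : Matrix k k ℂ) : ℝ :=
  ⨆ i, Real.sqrt
    ((Matrix.PosSemidef.isHermitian
      (Matrix.posSemidef_conjTranspose_mul_self M)).eigenvalues i)

/-- Partial trace over the environment factor `e`. -/
noncomputable def ptraceE {s e : Type*} [Fintype s] [Fintype e]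
    (M : Matrix (s × e) (s × e) ℂ) : Matrix s s ℂ :=
  Matrix.of fun i j => ∑ ν : e, M (i, ν) (j, ν)

/-- Partial trace over the system factor `s`. -/
noncomputable def ptraceS {s e : Type*} [Fintype s] [Fintype e]
    (M : Matrix (s × e) (s × e) ℂ) : Matrix e e ℂ :=
  Matrix.of fun μ ν => ∑ i : s, M (i, μ) (i, ν)

/-- A density matrix: positive semidefinite with unit trace. -/
def IsDensity {k : Type*} [Fintype k] (ρ : Matrix k k ℂ) : Prop :=
  ρ.PosSemidef ∧ Matrix.trace ρ = 1

/-!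
Expanding the square, `‖ρ₂ - ρ₁‖² = ‖ρ₂‖² + ‖ρ₁‖² - 2 Re tr (ρ₂ ρ₁)`. For a density matrix with
eigenvalues `λᵢ ≥ 0`, `‖ρ₁‖² = ∑ λᵢ² ≤ (∑ λᵢ)² = 1`, and writing `ρ₂ = U diag(ζ) U*` gives
`tr (ρ₂ ρ₁) = ∑ ζᵢ (U* ρ₁ U)ᵢᵢ ≥ ζ_min`, since the diagonal of `U* ρ₁ U` is a probability vector.
Both bounds are attained by the projector onto a `ζ_min`-eigenvector of `ρ₂`.
For the min-max, `∑ ζᵢ² ≥ 1/n` by Cauchy–Schwarz and `ζ_min ≤ 1/n`, with equality for `I/n`.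
-/

namespace Matrix

section Hermitian

variable {𝕜 n : Type*} [RCLike 𝕜] [Fintype n] [DecidableEq n] {A : Matrix n n 𝕜}

theorem IsHermitian.eigenvectorBasis_dotProduct_star (hA : A.IsHermitian) (i : n) :
    ⇑(hA.eigenvectorBasis i) ⬝ᵥ star ⇑(hA.eigenvectorBasis i) = 1 := by
  rw [← EuclideanSpace.inner_eq_star_dotProduct, inner_self_eq_norm_sq_to_K,
    hA.eigenvectorBasis.orthonormal.1 i]
  simp

theorem IsHermitian.eigenvalues_eq_of_eq_smul_one (hA : A.IsHermitian) {c : ℝ}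
    (hc : A = (c : 𝕜) • 1) (i : n) : hA.eigenvalues i = c := by
  have hv : A *ᵥ ⇑(hA.eigenvectorBasis i) = (c : 𝕜) • ⇑(hA.eigenvectorBasis i) := by
    nth_rw 1 [hc]
    rw [smul_mulVec, one_mulVec]
  rw [hA.eigenvalues_eq, hv, dotProduct_smul, dotProduct_comm,
    hA.eigenvectorBasis_dotProduct_star]
  simp

theorem IsHermitian.trace_mul_eq_sum_eigenvalues_mul (hA : A.IsHermitian) (B : Matrix n n 𝕜) :
    trace (A * B) = ∑ i, (hA.eigenvalues i : 𝕜) *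
      (star (hA.eigenvectorUnitary : Matrix n n 𝕜) * B * hA.eigenvectorUnitary) i i := by
  conv_lhs => rw [hA.spectral_theorem, Unitary.conjStarAlgAut_apply]
  rw [mul_assoc, trace_mul_cycle, trace_mul_comm]
  simp [trace, diagonal_mul]

theorem IsHermitian.trace_mul_self (hA : A.IsHermitian) :
    trace (A * A) = ∑ i, (hA.eigenvalues i : 𝕜) ^ 2 := by
  rw [hA.trace_mul_eq_sum_eigenvalues_mul, ← Unitary.conjStarAlgAut_star_apply (S := 𝕜),
    conjStarAlgAut_star_eigenvectorUnitary]
  simp [sq]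

theorem IsHermitian.iInf_eigenvalues_mul_re_trace_le (hA : A.IsHermitian) {B : Matrix n n 𝕜}
    (hB : B.PosSemidef) :
    (⨅ i, hA.eigenvalues i) * RCLike.re (trace B) ≤ RCLike.re (trace (A * B)) := by
  set U : Matrix n n 𝕜 := (hA.eigenvectorUnitary : Matrix n n 𝕜)
  have hσ : (star U * B * U).PosSemidef := by
    simpa [star_eq_conjTranspose] using hB.conjTranspose_mul_mul_same U
  have htrace : trace B = trace (star U * B * U) := by
    rw [trace_mul_cycle, mem_unitaryGroup_iff.mp hA.eigenvectorUnitary.2, one_mul]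
  rw [hA.trace_mul_eq_sum_eigenvalues_mul, htrace, trace, map_sum, map_sum, Finset.mul_sum]
  refine Finset.sum_le_sum fun i _ => ?_
  rw [RCLike.re_ofReal_mul]
  exact mul_le_mul_of_nonneg_right (ciInf_le (Set.finite_range _).bddBelow i)
    (RCLike.nonneg_iff.mp hσ.diag_nonneg).1

end Hermitian

theorem trace_mul_vecMulVec_of_mulVec_eq_smul {R n : Type*} [CommSemiring R] [Fintype n]
    {A : Matrix n n R} {v : n → R} {c : R} (hAv : A *ᵥ v = c • v) (w : n → R) :
    trace (A * vecMulVec v w) = c * (v ⬝ᵥ w) := by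
  rw [mul_vecMulVec, trace_vecMulVec, hAv, smul_dotProduct, smul_eq_mul]

end Matrix

section HilbertSchmidt

variable {n : Type*} [Fintype n]

theorem hsNorm_sq (M : Matrix n n ℂ) : hsNorm M ^ 2 = (trace (Mᴴ * M)).re :=
  Real.sq_sqrt (Complex.nonneg_iff.mp (posSemidef_conjTranspose_mul_self M).trace_nonneg).1

theorem hsNorm_sub_sq (A B : Matrix n n ℂ) :
    hsNorm (A - B) ^ 2 = hsNorm A ^ 2 + hsNorm B ^ 2 - 2 * (trace (Aᴴ * B)).re := by
  have hcross : (trace (Bᴴ * A)).re = (trace (Aᴴ * B)).re := by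
    rw [← conjTranspose_conjTranspose A, ← conjTranspose_mul, trace_conjTranspose,
      conjTranspose_conjTranspose, Complex.star_def, Complex.conj_re]
  have hexpand : (A - B)ᴴ * (A - B) = Aᴴ * A - Aᴴ * B - Bᴴ * A + Bᴴ * B := by
    rw [conjTranspose_sub]; noncomm_ring
  simp only [hsNorm_sq, hexpand, trace_add, trace_sub, Complex.add_re, Complex.sub_re]
  linarith

theorem hsNorm_sq_eq_sum_eigenvalues_sq [DecidableEq n] {A : Matrix n n ℂ} (hA : A.IsHermitian) :
    hsNorm A ^ 2 = ∑ i, hA.eigenvalues i ^ 2 := by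
  rw [hsNorm_sq, hA.eq, hA.trace_mul_self]
  norm_cast

end HilbertSchmidt

namespace IsDensity

variable {n : Type*} [Fintype n] [DecidableEq n] {ρ : Matrix n n ℂ}

theorem sum_eigenvalues (h : IsDensity ρ) : ∑ i, h.1.isHermitian.eigenvalues i = 1 := by
  have hsum : ∑ i, (h.1.isHermitian.eigenvalues i : ℂ) = 1 :=
    h.1.isHermitian.trace_eq_sum_eigenvalues ▸ h.2
  exact_mod_cast hsum

theorem hsNorm_sq_le_one (h : IsDensity ρ) : hsNorm ρ ^ 2 ≤ 1 := by
  calc hsNorm ρ ^ 2 = ∑ i, h.1.isHermitian.eigenvalues i ^ 2 :=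
        hsNorm_sq_eq_sum_eigenvalues_sq h.1.isHermitian
    _ ≤ (∑ i, h.1.isHermitian.eigenvalues i) ^ 2 :=
        Finset.sum_sq_le_sq_sum_of_nonneg fun i _ => h.1.eigenvalues_nonneg i
    _ = 1 := by rw [h.sum_eigenvalues, one_pow]

theorem iInf_eigenvalues_le_re_trace_mul {A : Matrix n n ℂ} (hA : A.IsHermitian)
    (h : IsDensity ρ) : ⨅ i, hA.eigenvalues i ≤ (trace (A * ρ)).re := by
  simpa [h.2] using hA.iInf_eigenvalues_mul_re_trace_le h.1

end IsDensity

section PureState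

variable {n : Type*} [Fintype n] {v : n → ℂ}

theorem IsDensity.vecMulVec_self_star (hv : v ⬝ᵥ star v = 1) :
    IsDensity (vecMulVec v (star v)) :=
  ⟨posSemidef_vecMulVec_self_star v, by rw [trace_vecMulVec, hv]⟩

theorem hsNorm_vecMulVec_self_star_sq (hv : v ⬝ᵥ star v = 1) :
    hsNorm (vecMulVec v (star v)) ^ 2 = 1 := by
  have hfix : vecMulVec v (star v) *ᵥ v = (1 : ℂ) • v := by
    rw [vecMulVec_mulVec, dotProduct_comm, hv, one_smul, MulOpposite.op_one, one_smul]
  rw [hsNorm_sq, conjTranspose_vecMulVec, star_star, trace_mul_vecMulVec_of_mulVec_eq_smul hfix,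
    hv, one_mul, Complex.one_re]

end PureState

theorem IsDensity.isGreatest_hsNorm_sq_sub {n : Type*} [Fintype n] [DecidableEq n] [Nonempty n]
    {ρ₂ : Matrix n n ℂ} (h : IsDensity ρ₂) :
    IsGreatest {x : ℝ | ∃ ρ₁ : Matrix n n ℂ, IsDensity ρ₁ ∧ x = hsNorm (ρ₂ - ρ₁) ^ 2}
      (hsNorm ρ₂ ^ 2 + 1 - 2 * ⨅ i, h.1.isHermitian.eigenvalues i) := by
  set hA := h.1.isHermitian
  constructor
  · obtain ⟨i₀, hi₀⟩ := exists_eq_ciInf_of_finite (f := hA.eigenvalues)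
    set v : n → ℂ := ⇑(hA.eigenvectorBasis i₀)
    have hv : v ⬝ᵥ star v = 1 := hA.eigenvectorBasis_dotProduct_star i₀
    have hAv : ρ₂ *ᵥ v = (hA.eigenvalues i₀ : ℂ) • v := by
      rw [hA.mulVec_eigenvectorBasis, Complex.coe_smul]
    refine ⟨_, IsDensity.vecMulVec_self_star hv, ?_⟩
    rw [hsNorm_sub_sq, hsNorm_vecMulVec_self_star_sq hv, hA.eq,
      trace_mul_vecMulVec_of_mulVec_eq_smul hAv, hv, hi₀]
    simp
  · rintro x ⟨ρ₁, h₁, rfl⟩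
    rw [hsNorm_sub_sq, hA.eq]
    linarith [h₁.hsNorm_sq_le_one, h₁.iInf_eigenvalues_le_re_trace_mul hA]

theorem IsDensity.card_sub_one_div_card_le {n : Type*} [Fintype n] [DecidableEq n] [Nonempty n]
    {ρ : Matrix n n ℂ} (h : IsDensity ρ) :
    ((Fintype.card n : ℝ) - 1) / Fintype.card n ≤
      hsNorm ρ ^ 2 + 1 - 2 * ⨅ i, h.1.isHermitian.eigenvalues i := by
  set ζ := h.1.isHermitian.eigenvalues
  have hsum : ∑ i, ζ i = 1 := h.sum_eigenvalues
  have hcard : (0 : ℝ) < Fintype.card n := by exact_mod_cast Fintype.card_pos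
  have hsq : 1 ≤ (Fintype.card n : ℝ) * ∑ i, ζ i ^ 2 := by
    simpa [hsum] using sq_sum_le_card_mul_sum_sq (s := Finset.univ) (f := ζ)
  have hmin : (Fintype.card n : ℝ) * ⨅ i, ζ i ≤ 1 := by
    simpa [hsum] using Finset.card_nsmul_le_sum Finset.univ ζ _
      fun i _ => ciInf_le (Set.finite_range ζ).bddBelow i
  rw [hsNorm_sq_eq_sum_eigenvalues_sq h.1.isHermitian, div_le_iff₀ hcard]
  linarith

section MaximallyMixed

variable (n : Type*) [Fintype n] [DecidableEq n]

noncomputable def maximallyMixed : Matrix n n ℂ := (Fintype.card n : ℂ)⁻¹ • 1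

variable [Nonempty n]

theorem isDensity_maximallyMixed : IsDensity (maximallyMixed n) := by
  refine ⟨PosSemidef.one.smul (by positivity), ?_⟩
  rw [maximallyMixed, trace_smul, trace_one, smul_eq_mul, inv_mul_cancel₀]
  exact_mod_cast Fintype.card_ne_zero

variable {n}

theorem eigenvalues_maximallyMixed (i : n) :
    (isDensity_maximallyMixed n).1.isHermitian.eigenvalues i = (Fintype.card n : ℝ)⁻¹ :=
  IsHermitian.eigenvalues_eq_of_eq_smul_one _ (by rw [maximallyMixed]; push_cast; rfl) i

theorem isGreatest_hsNorm_sq_maximallyMixed_sub :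
    IsGreatest
      {x : ℝ | ∃ ρ₁ : Matrix n n ℂ, IsDensity ρ₁ ∧ x = hsNorm (maximallyMixed n - ρ₁) ^ 2}
      (((Fintype.card n : ℝ) - 1) / Fintype.card n) := by
  convert (isDensity_maximallyMixed n).isGreatest_hsNorm_sq_sub using 1
  simp_rw [hsNorm_sq_eq_sum_eigenvalues_sq (isDensity_maximallyMixed n).1.isHermitian,
    eigenvalues_maximallyMixed, ciInf_const, Finset.sum_const, Finset.card_univ, nsmul_eq_mul]
  have hcard : (Fintype.card n : ℝ) ≠ 0 := by positivity
  field_simp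
  ring

end MaximallyMixed

/-- for every density matrix `ρ₂`, the maximum of `‖ρ₂ − ρ₁‖²_HS` over density
matrices `ρ₁` equals `‖ρ₂‖²_HS + 1 − 2ζ_min(ρ₂)`; the minimum over `ρ₂` of this maximum is
`(n_s − 1)/n_s`, attained at the maximally mixed state `I/n_s`. -/
theorem stmt14 {k : Type*} [Fintype k] [DecidableEq k] [Nonempty k] :
    (∀ (ρ₂ : Matrix k k ℂ) (h : IsDensity ρ₂),
      IsGreatest {x : ℝ | ∃ ρ₁ : Matrix k k ℂ, IsDensity ρ₁ ∧ x = hsNorm (ρ₂ - ρ₁) ^ 2}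
        (hsNorm ρ₂ ^ 2 + 1 - 2 * ⨅ i, (Matrix.PosSemidef.isHermitian h.1).eigenvalues i)) ∧
    IsLeast {y : ℝ | ∃ ρ₂ : Matrix k k ℂ, IsDensity ρ₂ ∧
        y = sSup {x : ℝ | ∃ ρ₁ : Matrix k k ℂ, IsDensity ρ₁ ∧ x = hsNorm (ρ₂ - ρ₁) ^ 2}}
      (((Fintype.card k : ℝ) - 1) / (Fintype.card k)) ∧
    sSup {x : ℝ | ∃ ρ₁ : Matrix k k ℂ, IsDensity ρ₁ ∧
        x = hsNorm (((Fintype.card k : ℂ))⁻¹ • (1 : Matrix k k ℂ) - ρ₁) ^ 2}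
      = ((Fintype.card k : ℝ) - 1) / (Fintype.card k) := by
  have hmixed := (isGreatest_hsNorm_sq_maximallyMixed_sub (n := k)).csSup_eq
  refine ⟨fun ρ₂ h => h.isGreatest_hsNorm_sq_sub,
    ⟨⟨maximallyMixed k, isDensity_maximallyMixed k, hmixed.symm⟩, ?_⟩, hmixed⟩
  rintro y ⟨ρ₂, h, rfl⟩
  rw [h.isGreatest_hsNorm_sq_sub.csSup_eq]
  exact h.card_sub_one_div_card_le
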